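/- arXiv:1204.5203 — 5 statements merged into one kernel-verified Lean document; each statement's English description precedes it below -/
import Mathlib

section
/- A function f : 𝔽₂ⁿ → 𝔽₂ is ⟨i:a:b⟩ canalizing if and only if there exists a function Q of the n−1 variables x₁,…,x_{i−1},x_{i+1},…,xₙ (i.e., a function 𝔽₂^{n−1} → 𝔽₂ not depending on x_i) such that f(x₁,…,xₙ) = (x_i ⊕ a)·Q(x₁,…,x_{i−1},x_{i+1},…,xₙ) ⊕ b, with multiplication and ⊕ taken in 𝔽₂. -/
/-- `f` is `⟨i:a:b⟩` canalizing: whenever `xᵢ = a`, `f` outputs `b`,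
regardless of the other variables. -/
def IsCanalizing {n : ℕ} (f : (Fin n → ZMod 2) → ZMod 2) (i : Fin n)
    (a b : ZMod 2) : Prop :=
  ∀ x : Fin n → ZMod 2, f (Function.update x i a) = b

open Function

lemma zmod_two_eq_or_eq_add_one (x a : ZMod 2) : x = a ∨ x = a + 1 := by
  revert x a; decide

/-- Over `𝔽₂` the only alternative to `xᵢ = a` is `xᵢ = a + 1`, where `xᵢ + a = 1`; so the
canalized output `b` and the value at `xᵢ = a + 1` determine `f`. -/
theorem eq_mul_add_of_update_eq {ι : Type*} [DecidableEq ι] {f : (ι → ZMod 2) → ZMod 2}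
    {i : ι} {a b : ZMod 2} (hf : ∀ x, f (update x i a) = b) (x : ι → ZMod 2) :
    f x = (x i + a) * (f (update x i (a + 1)) + b) + b := by
  rcases zmod_two_eq_or_eq_add_one (x i) a with hx | hx
  · have hfx : f x = b := by simpa [← hx] using hf x
    rw [hfx, hx, CharTwo.add_self_eq_zero, zero_mul, zero_add]
  · rw [← hx, update_eq_self, hx, add_right_comm, CharTwo.add_self_eq_zero, zero_add, one_mul,
      add_assoc, CharTwo.add_self_eq_zero, add_zero]

/-- `f` is `⟨i:a:b⟩` canalizing iff `f(x) = (xᵢ ⊕ a)·Q(x) ⊕ b` for some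
function `Q` not depending on the variable `xᵢ`. -/
theorem statement1 {n : ℕ} (f : (Fin n → ZMod 2) → ZMod 2) (i : Fin n)
    (a b : ZMod 2) :
    IsCanalizing f i a b ↔
      ∃ Q : (Fin n → ZMod 2) → ZMod 2,
        (∀ (x : Fin n → ZMod 2) (c : ZMod 2), Q (Function.update x i c) = Q x) ∧
        ∀ x : Fin n → ZMod 2, f x = (x i + a) * Q x + b := by
  constructor
  · intro hf
    exact ⟨fun x ↦ f (update x i (a + 1)) + b, fun x c ↦ by simp only [update_idem],
      eq_mul_add_of_update_eq hf⟩
  · rintro ⟨Q, -, hQ⟩ x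
    rw [hQ, update_self, CharTwo.add_self_eq_zero, zero_mul, zero_add]
end

section
/- Let f : 𝔽₂ⁿ → 𝔽₂ be a nested canalizing function (so every variable of f is essential). Then every variable of f is a most dominant variable if and only if f(x₁,…,xₙ) = (x₁⊕a₁)(x₂⊕a₂)⋯(xₙ⊕aₙ) ⊕ b for some a₁,…,aₙ, b ∈ 𝔽₂, i.e., f is an extended monomial in all n variables plus a constant. -/
/-!
If every variable is most dominant, then for each `i` there are `cᵢ, dᵢ` with `xᵢ = cᵢ ⇒ f x = dᵢ`;
evaluating at `x = c` shows all `dᵢ` equal a common `d`. So `f = d` off the single point `c + 1`,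
and since a nested canalizing function is not constant, `f (c + 1) = d + 1`: this is
`∏ (xⱼ + cⱼ) + d`. Conversely such a monomial is canalized to `b` by `xᵢ = aᵢ` for every `i`,
hence is nested canalizing in any variable order.
-/

/-- `f` is nested canalizing in the variable order `σ(0), σ(1), …, σ(n-1)`
with canalizing input values `a` and canalized output values `b`:
`f x = b k` whenever `x (σ j) = a j + 1` for all `j < k` and `x (σ k) = a k`,
and `f x = b (last) + 1` whenever `x (σ j) = a j + 1` for all `j`. -/
def IsNCF {n : ℕ} (f : (Fin n → ZMod 2) → ZMod 2) (σ : Equiv.Perm (Fin n))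
    (a b : Fin n → ZMod 2) : Prop :=
  (∀ (k : Fin n) (x : Fin n → ZMod 2),
      (∀ j : Fin n, j < k → x (σ j) = a j + 1) → x (σ k) = a k → f x = b k) ∧
  (∀ k : Fin n, (∀ j : Fin n, j ≤ k) →
      ∀ x : Fin n → ZMod 2, (∀ j : Fin n, x (σ j) = a j + 1) → f x = b k + 1)

section ExtendedMonomial

variable {ι : Type*} [Fintype ι]

lemma ZMod.two_eq_add_one_of_ne {u v : ZMod 2} (h : u ≠ v) : u = v + 1 := by
  revert u v; decide

lemma prod_add_eq_zero_iff (x a : ι → ZMod 2) : ∏ j, (x j + a j) = 0 ↔ ∃ j, x j = a j := by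
  simp [Finset.prod_eq_zero_iff, CharTwo.add_eq_zero]

lemma prod_add_eq_one {x a : ι → ZMod 2} (h : ∀ j, x j = a j + 1) : ∏ j, (x j + a j) = 1 :=
  Finset.prod_eq_one fun j _ => by rw [h j, add_right_comm, CharTwo.add_self_eq_zero, zero_add]

lemma eq_prod_add_of_forall_canalizing {f : (ι → ZMod 2) → ZMod 2} {c : ι → ZMod 2} {d : ZMod 2}
    (hcan : ∀ i x, x i = c i → f x = d) (hf : ∃ y z, f y ≠ f z) (x : ι → ZMod 2) :
    f x = ∏ j, (x j + c j) + d := by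
  by_cases hx : ∃ i, x i = c i
  · obtain ⟨i, hi⟩ := hx
    rw [(prod_add_eq_zero_iff x c).2 ⟨i, hi⟩, zero_add, hcan i x hi]
  · push Not at hx
    obtain ⟨w, hw⟩ : ∃ w, f w ≠ d := by
      obtain ⟨y, z, hyz⟩ := hf
      by_contra! h
      exact hyz ((h y).trans (h z).symm)
    have hwx : w = x := funext fun t =>
      (ZMod.two_eq_add_one_of_ne fun ht => hw (hcan t w ht)).trans
        (ZMod.two_eq_add_one_of_ne (hx t)).symm
    rw [prod_add_eq_one fun j => ZMod.two_eq_add_one_of_ne (hx j), ← hwx,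
      ZMod.two_eq_add_one_of_ne hw, add_comm]

end ExtendedMonomial

namespace IsNCF

variable {n : ℕ} {f : (Fin n → ZMod 2) → ZMod 2} {σ : Equiv.Perm (Fin n)} {a b : Fin n → ZMod 2}

lemma apply_eq_of_apply_first_eq (h : IsNCF f σ a b) (hn : 0 < n) {x : Fin n → ZMod 2}
    (hx : x (σ ⟨0, hn⟩) = a ⟨0, hn⟩) : f x = b ⟨0, hn⟩ :=
  h.1 ⟨0, hn⟩ x (fun j hj => absurd hj (Nat.not_lt_zero j)) hx

lemma exists_apply_ne (h : IsNCF f σ a b) (hn : 0 < n) : ∃ y z, f y ≠ f z := by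
  set last : Fin n := ⟨n - 1, by omega⟩
  have hle : ∀ j : Fin n, j ≤ last := fun j => Fin.le_def.mpr (by simp [last]; omega)
  set y : Fin n → ZMod 2 := fun t => a (σ.symm t) + 1
  have hy : f y = b last + 1 := h.2 last hle y fun j => by simp [y]
  have hz : f (Function.update y (σ last) (a last)) = b last := by
    refine h.1 last _ (fun j hj => ?_) (by simp)
    rw [Function.update_of_ne (σ.injective.ne hj.ne)]
    simp [y]
  refine ⟨y, Function.update y (σ last) (a last), ?_⟩
  rw [hy, hz]
  exact fun h => one_ne_zero (add_eq_left.mp h)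

end IsNCF

lemma isNCF_prod_add {n : ℕ} (σ : Equiv.Perm (Fin n)) (a : Fin n → ZMod 2) (b : ZMod 2) :
    IsNCF (fun x => ∏ j, (x j + a j) + b) σ (a ∘ σ) (fun _ => b) := by
  refine ⟨fun k x _ hk => ?_, fun k _ x hx => ?_⟩
  · dsimp only
    rw [(prod_add_eq_zero_iff x a).2 ⟨σ k, hk⟩, zero_add]
  · dsimp only
    rw [prod_add_eq_one fun j => by simpa using hx (σ.symm j), add_comm]

/-- For a nested canalizing function `f`, every variable is most dominant
(i.e. for every `i` there is a variable order starting with `xᵢ` in which `f`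
is nested canalizing) iff `f(x) = (x₁⊕a₁)⋯(xₙ⊕aₙ) ⊕ b`, i.e. `f` is an
extended monomial in all `n` variables plus a constant. -/
theorem statement3 {n : ℕ} (hn : 0 < n) (f : (Fin n → ZMod 2) → ZMod 2)
    (hf : ∃ (σ : Equiv.Perm (Fin n)) (a b : Fin n → ZMod 2), IsNCF f σ a b) :
    (∀ i : Fin n, ∃ (σ : Equiv.Perm (Fin n)) (a b : Fin n → ZMod 2),
        σ ⟨0, hn⟩ = i ∧ IsNCF f σ a b) ↔
      ∃ (a : Fin n → ZMod 2) (b : ZMod 2),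
        ∀ x : Fin n → ZMod 2, f x = (∏ j : Fin n, (x j + a j)) + b := by
  constructor
  · intro h
    choose σ a b hσ hncf using h
    set c : Fin n → ZMod 2 := fun i => a i ⟨0, hn⟩
    have hcan : ∀ i x, x i = c i → f x = b i ⟨0, hn⟩ := fun i x hx =>
      (hncf i).apply_eq_of_apply_first_eq hn (by rwa [hσ i])
    have hcan_common : ∀ i x, x i = c i → f x = f c := fun i x hx =>
      (hcan i x hx).trans (hcan i c rfl).symm
    obtain ⟨σ₀, a₀, b₀, hncf₀⟩ := hf
    exact ⟨c, f c, eq_prod_add_of_forall_canalizing hcan_common (hncf₀.exists_apply_ne hn)⟩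
  · rintro ⟨a, b, hab⟩ i
    obtain rfl : f = fun x => ∏ j, (x j + a j) + b := funext hab
    exact ⟨Equiv.swap ⟨0, hn⟩ i, _, _, Equiv.swap_apply_left _ _, isNCF_prod_add _ a b⟩
end

section
/- Let n ≥ 2 and let f : 𝔽₂ⁿ → 𝔽₂ be given in the layered form f = M₁(M₂(⋯(M_{r−1}(M_r ⊕ 1) ⊕ 1)⋯) ⊕ 1) ⊕ b, where each M_i is an extended monomial in k_i variables, the variable sets of the M_i are pairwise disjoint and together comprise all n variables, k_i ≥ 1 for i = 1,…,r−1, k_r ≥ 2, and k₁ + ⋯ + k_r = n. Then f is nested canalizing. -/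
/-- The nested expression `M i * (M (i+1) * ( … * (M (i+t-1) + 1) … ) + 1)`
with `t` factors, i.e. `nestVal M t i = Mᵢ(M_{i+1}(⋯(M_{i+t-1} ⊕ 1)⋯) ⊕ 1)`. -/
def nestVal (M : ℕ → ZMod 2) : ℕ → ℕ → ZMod 2
  | 0, _ => 0
  | 1, i => M i
  | (t + 2), i => M i * (nestVal M (t + 1) (i + 1) + 1)

/-- The extended monomial of the `i`-th layer, given the layer assignment `L`
and the complemented inputs `a`:  `Mᵢ(x) = ∏_{L j = i} (x j ⊕ a j)`. -/
def layerMon {n r : ℕ} (L : Fin n → Fin r) (a : Fin n → ZMod 2) (i : ℕ)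
    (x : Fin n → ZMod 2) : ZMod 2 :=
  ∏ j ∈ Finset.univ.filter (fun j : Fin n => (L j : ℕ) = i), (x j + a j)

/-- `kᵢ`, the number of variables in the `i`-th layer. -/
def layerSize {n r : ℕ} (L : Fin n → Fin r) (i : ℕ) : ℕ :=
  (Finset.univ.filter (fun j : Fin n => (L j : ℕ) = i)).card

/-- `K_l = k₀ + k₁ + ⋯ + k_{l-1}`, the number of variables in the first `l` layers. -/
def layerSum {n r : ℕ} (L : Fin n → Fin r) (l : ℕ) : ℕ :=
  ∑ i ∈ Finset.range l, layerSize L i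

/-- `f` is given in the layered form
`f = M₁(M₂(⋯(M_{r−1}(M_r ⊕ 1) ⊕ 1)⋯) ⊕ 1) ⊕ b`, where the `Mᵢ` are extended
monomials in pairwise disjoint sets of variables comprising all `n` variables
(the variable set of `Mᵢ` being the `i`-th layer `{j | L j = i}`), every layer
is nonempty, and the last layer has at least two variables. -/
def IsLayeredForm {n r : ℕ} (f : (Fin n → ZMod 2) → ZMod 2)
    (L : Fin n → Fin r) (a : Fin n → ZMod 2) (b : ZMod 2) : Prop :=
  1 ≤ r ∧
  (∀ i : Fin r, 1 ≤ layerSize L (i : ℕ)) ∧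
  2 ≤ layerSize L (r - 1) ∧
  ∀ x : Fin n → ZMod 2, f x = nestVal (fun i => layerMon L a i x) r 0 + b

/-!
Order the variables layer by layer (variables of `M₁` first, then those of `M₂`, …) and take
as canalizing input of each variable the value that kills its monomial. If the first variable
taking its canalizing value lies in layer `i`, all earlier monomials are `1` and `Mᵢ = 0`; since
`M(N ⊕ 1) = N ⊕ 1` when `M = 1`, the nested expression then evaluates to `i - 1`. If no variable
takes its canalizing value, every monomial is `1` and the expression evaluates to `r`.
-/

section NestVal

variable (M : ℕ → ZMod 2)

lemma nestVal_succ_of_eq_one {i : ℕ} (hM : M i = 1) (t : ℕ) :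
    nestVal M (t + 1) i = nestVal M t (i + 1) + 1 := by
  rcases t with _ | t <;> simp [nestVal, hM]

lemma nestVal_succ_of_eq_zero {i : ℕ} (hM : M i = 0) (t : ℕ) : nestVal M (t + 1) i = 0 := by
  rcases t with _ | t <;> simp [nestVal, hM]

lemma nestVal_add_of_eq_one {s i : ℕ} (hM : ∀ j < s, M (i + j) = 1) (t : ℕ) :
    nestVal M (t + s) i = nestVal M t (i + s) + s := by
  induction s generalizing i with
  | zero => simp
  | succ s ih =>
    have hrest : ∀ j < s, M (i + 1 + j) = 1 := fun j hj => by
      simpa [Nat.add_right_comm, Nat.add_assoc] using hM (j + 1) (by omega)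
    rw [← Nat.add_assoc, nestVal_succ_of_eq_one M (by simpa using hM 0 (by omega)), ih hrest,
      show i + 1 + s = i + (s + 1) by omega]
    push_cast
    ring

lemma nestVal_eq_of_eq_one_of_eq_zero {s t : ℕ} (hst : s < t) (hM : ∀ j < s, M j = 1)
    (hMs : M s = 0) : nestVal M t 0 = s := by
  obtain ⟨u, rfl⟩ := Nat.exists_eq_add_of_lt hst
  rw [show s + u + 1 = u + 1 + s by omega, nestVal_add_of_eq_one M (i := 0) (by simpa using hM),
    zero_add, nestVal_succ_of_eq_zero M hMs, zero_add]

lemma nestVal_eq_of_eq_one {t : ℕ} (hM : ∀ j < t, M j = 1) : nestVal M t 0 = t := by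
  simpa [nestVal] using nestVal_add_of_eq_one M (i := 0) (by simpa using hM) 0

end NestVal

section Layers

variable {n r : ℕ} (L : Fin n → Fin r) (a : Fin n → ZMod 2) {x : Fin n → ZMod 2}

lemma layerMon_eq_one {i : ℕ} (hx : ∀ j, (L j : ℕ) = i → x j = a j + 1) :
    layerMon L a i x = 1 := by
  refine Finset.prod_eq_one fun j hj => ?_
  rw [hx j (Finset.mem_filter.mp hj).2, add_right_comm, CharTwo.add_self_eq_zero, zero_add]

lemma layerMon_eq_zero {j : Fin n} (hx : x j = a j) : layerMon L a (L j) x = 0 :=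
  Finset.prod_eq_zero (Finset.mem_filter.mpr ⟨Finset.mem_univ j, rfl⟩)
    (by rw [hx, CharTwo.add_self_eq_zero])

variable {L} {σ : Equiv.Perm (Fin n)}

lemma layerMon_eq_one_of_lt_layer (hσ : Monotone (L ∘ σ)) {k : Fin n}
    (hx : ∀ j < k, x (σ j) = a (σ j) + 1) {i : ℕ} (hi : i < L (σ k)) :
    layerMon L a i x = 1 := by
  refine layerMon_eq_one L a fun j hj => ?_
  have hjk : σ.symm j < k := hσ.reflect_lt (by simp [Fin.lt_def, hj, hi])
  simpa using hx _ hjk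

lemma layer_eq_last_of_forall_le (hσ : Monotone (L ∘ σ)) {k : Fin n} (hk : ∀ j, j ≤ k)
    (hlast : 0 < layerSize L (r - 1)) : (L (σ k) : ℕ) = r - 1 := by
  obtain ⟨j, hj⟩ := Finset.card_pos.mp hlast
  have hle : L j ≤ L (σ k) := by simpa using hσ (hk (σ.symm j))
  have := (L (σ k)).is_lt
  have := (Finset.mem_filter.mp hj).2
  rw [Fin.le_def] at hle
  omega

end Layers

theorem statement5_general {n r : ℕ} (f : (Fin n → ZMod 2) → ZMod 2)
    (L : Fin n → Fin r) (a : Fin n → ZMod 2) (b : ZMod 2)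
    (h : IsLayeredForm f L a b) :
    ∃ (σ : Equiv.Perm (Fin n)) (α β : Fin n → ZMod 2), IsNCF f σ α β := by
  obtain ⟨hr, -, hlast, hf⟩ := h
  have hσ := Tuple.monotone_sort L
  set σ := Tuple.sort L
  refine ⟨σ, fun k => a (σ k), fun k => b + (L (σ k) : ℕ), ?_, ?_⟩
  · intro k x hx hxk
    rw [hf, nestVal_eq_of_eq_one_of_eq_zero _ (L (σ k)).is_lt
      (fun i hi => layerMon_eq_one_of_lt_layer a hσ hx hi) (layerMon_eq_zero L a hxk), add_comm]
  · intro k hk x hx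
    dsimp only
    have hones : ∀ i, layerMon L a i x = 1 := fun i =>
      layerMon_eq_one L a fun j _ => by simpa using hx (σ.symm j)
    rw [hf, nestVal_eq_of_eq_one _ fun i _ => hones i, layer_eq_last_of_forall_le hσ hk (by omega),
      Nat.cast_pred (by omega)]
    ring

/-- Every function in the layered form
`f = M₁(M₂(⋯(M_{r−1}(M_r ⊕ 1) ⊕ 1)⋯) ⊕ 1) ⊕ b` (n ≥ 2) is nested canalizing. -/
theorem statement5 {n r : ℕ} (hn : 2 ≤ n) (f : (Fin n → ZMod 2) → ZMod 2)
    (L : Fin n → Fin r) (a : Fin n → ZMod 2) (b : ZMod 2)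
    (h : IsLayeredForm f L a b) :
    ∃ (σ : Equiv.Perm (Fin n)) (α β : Fin n → ZMod 2), IsNCF f σ α β :=
  statement5_general f L a b h
end

section
/- Let n ≥ 2 and let f_r : 𝔽₂ⁿ → 𝔽₂ be defined by f₁ = M₁ and, for r ≥ 2, f_r = M₁(M₂(⋯(M_{r−1}(M_r ⊕ 1) ⊕ 1)⋯) ⊕ 1), where each M_i is an extended monomial in k_i variables, the variable sets of the M_i are pairwise disjoint and together comprise all n variables, k_i ≥ 1 for i = 1,…,r−1, k_r ≥ 2, and k₁ + ⋯ + k_r = n. Then the Hamming weight of f_r is W(f_r) = Σ_{j=1}^{r} (−1)^{j−1} · 2^{n − (k₁+⋯+k_j)}. -/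
/-! Read the values of `f_r` as integers `0, 1`. Since `u (v ⊕ 1)` then equals `u (1 - v)`,
unwinding the nesting writes `f_r` as the alternating sum `Σⱼ (-1)^(j-1) M₁ ⋯ Mⱼ` of its prefix
products. The prefix product `M₁ ⋯ Mⱼ` is a single extended monomial in the `k₁ + ⋯ + kⱼ`
variables of the first `j` layers, so its weight is `2^(n - (k₁ + ⋯ + kⱼ))`. -/

open Finset

lemma intCast_val_mul_zmod_two (u v : ZMod 2) : ((u * v).val : ℤ) = u.val * v.val := by
  revert u v; decide

lemma intCast_val_add_one_zmod_two (v : ZMod 2) : ((v + 1).val : ℤ) = 1 - v.val := by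
  revert v; decide

lemma intCast_val_prod_zmod_two {ι : Type*} (s : Finset ι) (g : ι → ZMod 2) :
    ((∏ i ∈ s, g i).val : ℤ) = ∏ i ∈ s, ((g i).val : ℤ) := by
  induction s using Finset.cons_induction with
  | empty => rfl
  | cons i s hi ih => rw [prod_cons, prod_cons, intCast_val_mul_zmod_two, ih]

lemma sum_intCast_val_add_zmod_two (c : ZMod 2) : ∑ v : ZMod 2, ((v + c).val : ℤ) = 1 := by
  revert c; decide

lemma card_filter_eq_one_zmod_two {α : Type*} [Fintype α] (g : α → ZMod 2) :
    (#{x | g x = 1} : ℤ) = ∑ x, ((g x).val : ℤ) := by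
  have indicator : ∀ v : ZMod 2, (v.val : ℤ) = if v = 1 then 1 else 0 := by decide
  simp only [indicator, sum_boole]

lemma intCast_val_nestVal (M : ℕ → ZMod 2) (t i : ℕ) :
    ((nestVal M t i).val : ℤ) =
      ∑ j ∈ range t, (-1) ^ j * ∏ m ∈ range (j + 1), ((M (i + m)).val : ℤ) := by
  induction t generalizing i with
  | zero => rfl
  | succ t ih =>
    cases t with
    | zero => simp [nestVal]
    | succ s =>
      have peel_first : ∀ j ∈ range (s + 1),
          (-1) ^ (j + 1) * ∏ m ∈ range (j + 1 + 1), ((M (i + m)).val : ℤ) =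
            -(M i).val * ((-1) ^ j * ∏ m ∈ range (j + 1), ((M (i + 1 + m)).val : ℤ)) := by
        intro j _
        rw [prod_range_succ', add_zero, pow_succ]
        simp only [add_assoc, add_comm 1]
        ring
      rw [nestVal, intCast_val_mul_zmod_two, intCast_val_add_one_zmod_two, ih,
        sum_range_succ' _ (s + 1), sum_congr rfl peel_first, ← mul_sum]
      simp only [pow_zero, one_mul, zero_add, prod_range_one, add_zero]
      ring

lemma sum_prod_intCast_val_add_zmod_two {ι : Type*} [Fintype ι] [DecidableEq ι] (S : Finset ι)
    (a : ι → ZMod 2) :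
    ∑ x : ι → ZMod 2, ∏ i ∈ S, ((x i + a i).val : ℤ) = 2 ^ (Fintype.card ι - #S) := by
  calc ∑ x : ι → ZMod 2, ∏ i ∈ S, ((x i + a i).val : ℤ)
      = ∑ x : ι → ZMod 2, ∏ i, if i ∈ S then ((x i + a i).val : ℤ) else 1 := by
        simp only [prod_ite_mem, univ_inter]
    _ = ∏ i, ∑ v : ZMod 2, if i ∈ S then ((v + a i).val : ℤ) else 1 :=
        (Fintype.prod_sum fun i (v : ZMod 2) => if i ∈ S then ((v + a i).val : ℤ) else 1).symm
    _ = ∏ i, if i ∈ S then 1 else 2 := by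
        congr! 1 with i
        split_ifs
        · exact sum_intCast_val_add_zmod_two (a i)
        · simp
    _ = 2 ^ (Fintype.card ι - #S) := by
        rw [prod_ite, prod_const_one, one_mul, prod_const, filter_not, filter_mem_eq_inter,
          univ_inter, card_univ_sdiff]

section Layers

variable {n r : ℕ} (L : Fin n → Fin r)

lemma prod_range_layerMon (a x : Fin n → ZMod 2) (l : ℕ) :
    ∏ m ∈ range l, layerMon L a m x = ∏ i with (L i : ℕ) < l, (x i + a i) := by
  simpa only [layerMon, mem_range] using
    prod_fiberwise_eq_prod_filter univ (range l) (fun i => (L i : ℕ)) _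

lemma card_filter_lt_eq_layerSum (l : ℕ) : #{i | (L i : ℕ) < l} = layerSum L l := by
  simpa only [layerSum, layerSize, mem_range] using
    (sum_card_fiberwise_eq_card_filter univ (range l) (fun i => (L i : ℕ))).symm

end Layers

theorem statement11_general {n r : ℕ} (f : (Fin n → ZMod 2) → ZMod 2)
    (L : Fin n → Fin r) (a : Fin n → ZMod 2)
    (h : IsLayeredForm f L a 0) :
    ((Finset.univ.filter (fun x : Fin n → ZMod 2 => f x = 1)).card : ℤ) =
      ∑ j ∈ Finset.range r, (-1 : ℤ) ^ j * 2 ^ (n - layerSum L (j + 1)) := by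
  obtain ⟨-, -, -, hf⟩ := h
  have prefix_weight (j : ℕ) :
      ∑ x : Fin n → ZMod 2, ∏ m ∈ range (j + 1), ((layerMon L a m x).val : ℤ) =
        2 ^ (n - layerSum L (j + 1)) := by
    simp_rw [← intCast_val_prod_zmod_two, prod_range_layerMon, intCast_val_prod_zmod_two]
    rw [sum_prod_intCast_val_add_zmod_two, Fintype.card_fin, card_filter_lt_eq_layerSum]
  simp only [card_filter_eq_one_zmod_two, hf, add_zero, intCast_val_nestVal, zero_add]
  rw [sum_comm]
  simp only [← mul_sum, prefix_weight]

/-- The Hamming weight of `f_r = M₁(M₂(⋯(M_{r−1}(M_r ⊕ 1) ⊕ 1)⋯) ⊕ 1)`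
(the layered form with constant `b = 0`) is
`W(f_r) = Σ_{j=1}^{r} (−1)^{j−1} · 2^{n − (k₁+⋯+k_j)}`. -/
theorem statement11 {n r : ℕ} (hn : 2 ≤ n) (f : (Fin n → ZMod 2) → ZMod 2)
    (L : Fin n → Fin r) (a : Fin n → ZMod 2)
    (h : IsLayeredForm f L a 0) :
    ((Finset.univ.filter (fun x : Fin n → ZMod 2 => f x = 1)).card : ℤ) =
      ∑ j ∈ Finset.range r, (-1 : ℤ) ^ j * 2 ^ (n - layerSum L (j + 1)) :=
  statement11_general f L a h
end

section
/- Let n ≥ 2 and let f_r : 𝔽₂ⁿ → 𝔽₂ be defined by f₁ = M₁ and, for r ≥ 2, f_r = M₁(M₂(⋯(M_{r−1}(M_r ⊕ 1) ⊕ 1)⋯) ⊕ 1), where each M_i is an extended monomial in k_i variables, the variable sets of the M_i are pairwise disjoint and together comprise all n variables, k_i ≥ 1 for i = 1,…,r−1, k_r ≥ 2, and k₁ + ⋯ + k_r = n. Then the Hamming weight of f_r ⊕ 1 is W(f_r ⊕ 1) = Σ_{j=0}^{r} (−1)^{j} · 2^{n − (k₁+⋯+k_j)}, where the empty sum k₁+⋯+k_j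 for j = 0 is interpreted as 0 (so the j = 0 term is 2ⁿ). -/
/-!
Write `Pₗ` for the set of inputs on which the first `l` monomials `M₀, …, M_{l-1}` all equal
`1`, and `Zₜ(l)` for the set of `x ∈ Pₗ` at which the nested expression of `t` factors starting
at `Mₗ` vanishes. Since `Mₗ(g ⊕ 1) = 1` exactly when `Mₗ = 1` and `g = 0`, the complement of
`Z_{t+1}(l)` in `Pₗ` is `Zₜ(l+1)`, so `|Z_{t+1}(l)| + |Zₜ(l+1)| = |Pₗ|`, and unrolling gives the
alternating sum `|Z_r(0)| = Σⱼ (−1)ʲ |Pⱼ|`. For extended monomials on disjoint layers, `Pⱼ`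
fixes exactly the `k₁ + ⋯ + kⱼ` variables of the first `j` layers, so `|Pⱼ| = 2^{n − (k₁+⋯+kⱼ)}`.
-/

open Finset

lemma nestVal_succ (M : ℕ → ZMod 2) (t i : ℕ) :
    nestVal M (t + 1) i = M i * (nestVal M t (i + 1) + 1) := by
  cases t with
  | zero => simp [nestVal]
  | succ t => rfl

lemma ZMod.two_mul_add_one_eq_zero_iff (u v : ZMod 2) :
    u * (v + 1) = 0 ↔ ¬(u = 1 ∧ v = 0) := by
  revert u v; decide

section NestedCount

variable {α : Type*} [Fintype α] (M : ℕ → α → ZMod 2)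

def prefixOnes (l : ℕ) : Finset α :=
  univ.filter fun x => ∀ i < l, M i x = 1

def nestZeros (t l : ℕ) : Finset α :=
  (prefixOnes M l).filter fun x => nestVal (M · x) t l = 0

lemma mem_prefixOnes_succ {l : ℕ} {x : α} :
    x ∈ prefixOnes M (l + 1) ↔ x ∈ prefixOnes M l ∧ M l x = 1 := by
  simp only [prefixOnes, mem_filter, mem_univ, true_and, Nat.forall_lt_succ_right]

lemma card_nestZeros_succ_add_card_nestZeros (t l : ℕ) :
    #(nestZeros M (t + 1) l) + #(nestZeros M t (l + 1)) = #(prefixOnes M l) := by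
  have hcompl : (prefixOnes M l).filter (fun x => ¬nestVal (M · x) (t + 1) l = 0)
      = nestZeros M t (l + 1) := by
    ext x
    simp only [nestZeros, mem_filter, mem_prefixOnes_succ, nestVal_succ,
      ZMod.two_mul_add_one_eq_zero_iff, not_not, and_assoc]
  rw [nestZeros, ← hcompl, card_filter_add_card_filter_not]

theorem card_nestZeros (t l : ℕ) :
    (#(nestZeros M t l) : ℤ) =
      ∑ j ∈ range (t + 1), (-1 : ℤ) ^ j * #(prefixOnes M (l + j)) := by
  induction t generalizing l with
  | zero => simp [nestZeros, nestVal]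
  | succ t ih =>
    have hrec : (#(nestZeros M (t + 1) l) : ℤ) = #(prefixOnes M l) - #(nestZeros M t (l + 1)) := by
      rw [← card_nestZeros_succ_add_card_nestZeros M t l]
      push_cast
      ring
    rw [hrec, ih, sum_range_succ' _ (t + 1)]
    rw [pow_zero, one_mul, add_zero, sub_eq_neg_add, ← sum_neg_distrib]
    congr 1
    refine sum_congr rfl fun j _ => ?_
    rw [add_right_comm, add_assoc, pow_succ]
    ring

end NestedCount

lemma card_filter_forall_imp_eq {ι β : Type*} [Fintype ι] [DecidableEq ι] [Fintype β]
    [DecidableEq β] (p : ι → Prop) [DecidablePred p] (c : ι → β) :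
    #(univ.filter fun x : ι → β => ∀ i, p i → x i = c i) =
      Fintype.card β ^ #(univ.filter fun i => ¬p i) := by
  have hpi : univ.filter (fun x : ι → β => ∀ i, p i → x i = c i)
      = Fintype.piFinset fun i => if p i then {c i} else univ := by
    ext x
    simp only [mem_filter, mem_univ, true_and, Fintype.mem_piFinset]
    refine forall_congr' fun i => ?_
    split_ifs <;> simp_all
  rw [hpi, Fintype.card_piFinset]
  simp [apply_ite card, prod_ite]

section Layers

variable {n r : ℕ} (L : Fin n → Fin r)

lemma card_filter_layer_lt (l : ℕ) : #(univ.filter fun v => (L v : ℕ) < l) = layerSum L l := by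
  rw [card_eq_sum_card_fiberwise (f := fun v => (L v : ℕ)) (t := range l)
    (fun v hv => mem_range.mpr (mem_filter.mp hv).2), layerSum]
  refine sum_congr rfl fun i hi => ?_
  rw [layerSize, filter_filter]
  congr 1
  ext v
  simp only [mem_filter, mem_univ, true_and, and_iff_right_iff_imp]
  exact fun hv => hv ▸ mem_range.mp hi

lemma card_filter_layer_not_lt (l : ℕ) :
    #(univ.filter fun v => ¬(L v : ℕ) < l) = n - layerSum L l := by
  have hsplit := card_filter_add_card_filter_not (s := univ) fun v => (L v : ℕ) < l
  rw [card_univ, Fintype.card_fin, card_filter_layer_lt] at hsplit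
  omega

lemma layerMon_eq_one_iff (a : Fin n → ZMod 2) (i : ℕ) (x : Fin n → ZMod 2) :
    layerMon L a i x = 1 ↔ ∀ v, (L v : ℕ) = i → x v = a v + 1 := by
  have hunit : ∀ u : ZMod 2, u ≠ 0 ↔ u = 1 := by decide
  have hcompl : ∀ u w : ZMod 2, u + w = 1 ↔ u = w + 1 := by decide
  rw [layerMon, ← hunit, prod_ne_zero_iff]
  simp [hunit, hcompl]

lemma card_prefixOnes_layerMon (a : Fin n → ZMod 2) (l : ℕ) :
    #(prefixOnes (fun i x => layerMon L a i x) l) = 2 ^ (n - layerSum L l) := by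
  have hprefix : prefixOnes (fun i x => layerMon L a i x) l
      = univ.filter fun x : Fin n → ZMod 2 => ∀ v, (L v : ℕ) < l → x v = a v + 1 := by
    ext x
    simp only [prefixOnes, mem_filter, mem_univ, true_and, layerMon_eq_one_iff]
    exact ⟨fun h v hv => h _ hv v rfl, fun h i hi v hv => h v (hv ▸ hi)⟩
  rw [hprefix, ← card_filter_layer_not_lt]
  convert card_filter_forall_imp_eq (fun v => (L v : ℕ) < l) (fun v => a v + 1)
  exact (ZMod.card 2).symm

end Layers

theorem statement12_general {n r : ℕ} (f : (Fin n → ZMod 2) → ZMod 2)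
    (L : Fin n → Fin r) (a : Fin n → ZMod 2)
    (h : IsLayeredForm f L a 0) :
    ((Finset.univ.filter (fun x : Fin n → ZMod 2 => f x + 1 = 1)).card : ℤ) =
      ∑ j ∈ Finset.range (r + 1), (-1 : ℤ) ^ j * 2 ^ (n - layerSum L j) := by
  obtain ⟨-, -, -, hf⟩ := h
  have hweight : univ.filter (fun x => f x + 1 = 1)
      = nestZeros (fun i x => layerMon L a i x) r 0 := by
    ext x
    simp [nestZeros, prefixOnes, hf]
  rw [hweight, card_nestZeros]
  simp only [zero_add, card_prefixOnes_layerMon, Nat.cast_pow, Nat.cast_ofNat]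

/-- The Hamming weight of `f_r ⊕ 1`, where
`f_r = M₁(M₂(⋯(M_{r−1}(M_r ⊕ 1) ⊕ 1)⋯) ⊕ 1)` (the layered form with constant
`b = 0`), is `W(f_r ⊕ 1) = Σ_{j=0}^{r} (−1)^{j} · 2^{n − (k₁+⋯+k_j)}`, the
`j = 0` term being `2^n`. -/
theorem statement12 {n r : ℕ} (hn : 2 ≤ n) (f : (Fin n → ZMod 2) → ZMod 2)
    (L : Fin n → Fin r) (a : Fin n → ZMod 2)
    (h : IsLayeredForm f L a 0) :
    ((Finset.univ.filter (fun x : Fin n → ZMod 2 => f x + 1 = 1)).card : ℤ) =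
      ∑ j ∈ Finset.range (r + 1), (-1 : ℤ) ^ j * 2 ^ (n - layerSum L j) :=
  statement12_general f L a h
end
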